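/- arXiv:1704.01319 — 2 statements merged into one kernel-verified Lean document; each statement's English description precedes it below -/
import Mathlib

section
/- For each i define △_i(n) in k by △_i(2k) = k + k(-1)^{(2k-1)|x_i|^2} and △_i(2k+1) = k + 1 + k(-1)^{(2k-1)|x_i|^2} (so △_i(0) = 0). Then in R^e, for all exponents i_1, ..., i_n ≥ 0: h_R(x_1^{i_1} x_2^{i_2} ... x_n^{i_n}) = Σ_{r=1}^{n} (-1)^{(Σ_{l<r} i_l|x_l|)·|x_r|} △_r(i_r) y_r x_1^{i_1} ... x_{r-1}^{i_{r-1}} x_r^{i_r - 1} x_{r+1}^{i_{r+1}} ... x_n^{i_n}, where y_r = h_R(x_r) and the r-th summand is interpreted as 0 when i_r = 0. -/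
noncomputable section

open scoped DirectSum

/-- The sign `(-1)^m`, as an integer, for `m : ℤ`. -/
def sgn (m : ℤ) : ℤ := (Int.negOnePow m : ℤ)

/-- A differential graded Poisson algebra structure on a `ℤ`-graded `k`-algebra `A`,
whose grading is given by `𝒜`. -/
structure DGPoissonAlgebra (k : Type) [Field k] (A : Type) [Ring A] [Algebra k A]
    (𝒜 : ℤ → Submodule k A) : Type where
  /-- the Poisson bracket -/
  br : A →ₗ[k] A →ₗ[k] A
  /-- the differential -/
  d : A →ₗ[k] A
  br_mem : ∀ ⦃i j : ℤ⦄ ⦃a b : A⦄, a ∈ 𝒜 i → b ∈ 𝒜 j → br a b ∈ 𝒜 (i + j)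
  d_mem : ∀ ⦃i : ℤ⦄ ⦃a : A⦄, a ∈ 𝒜 i → d a ∈ 𝒜 (i + 1)
  antisymm : ∀ ⦃i j : ℤ⦄ ⦃a b : A⦄, a ∈ 𝒜 i → b ∈ 𝒜 j →
    br a b = -(sgn (i * j) • br b a)
  jacobi : ∀ ⦃i j l : ℤ⦄ ⦃a b c : A⦄, a ∈ 𝒜 i → b ∈ 𝒜 j → c ∈ 𝒜 l →
    br a (br b c) = br (br a b) c + sgn (i * j) • br b (br a c)
  gcomm : ∀ ⦃i j : ℤ⦄ ⦃a b : A⦄, a ∈ 𝒜 i → b ∈ 𝒜 j → a * b = sgn (i * j) • (b * a)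
  leibniz : ∀ ⦃i j l : ℤ⦄ ⦃a b c : A⦄, a ∈ 𝒜 i → b ∈ 𝒜 j → c ∈ 𝒜 l →
    br a (b * c) = br a b * c + sgn (i * j) • (b * br a c)
  d_sq : ∀ a : A, d (d a) = 0
  d_br : ∀ ⦃i j : ℤ⦄ ⦃a b : A⦄, a ∈ 𝒜 i → b ∈ 𝒜 j →
    d (br a b) = br (d a) b + sgn i • br a (d b)
  d_mul : ∀ ⦃i j : ℤ⦄ ⦃a b : A⦄, a ∈ 𝒜 i → b ∈ 𝒜 j →
    d (a * b) = d a * b + sgn i • (a * d b)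

/-- A differential graded algebra structure (i.e. a differential) on a `ℤ`-graded
`k`-algebra `B` with grading `ℬ`. -/
structure DGAlgebra (k : Type) [Field k] (B : Type) [Ring B] [Algebra k B]
    (ℬ : ℤ → Submodule k B) : Type where
  /-- the differential -/
  d : B →ₗ[k] B
  d_mem : ∀ ⦃i : ℤ⦄ ⦃b : B⦄, b ∈ ℬ i → d b ∈ ℬ (i + 1)
  d_sq : ∀ b : B, d (d b) = 0
  d_mul : ∀ ⦃i j : ℤ⦄ ⦃a b : B⦄, a ∈ ℬ i → b ∈ ℬ j →
    d (a * b) = d a * b + sgn i • (a * d b)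

/-- `f` is a DG algebra map: a degree-`0` algebra map commuting with the differentials. -/
structure IsDGAlgebraMap (k : Type) [Field k] {A B : Type} [Ring A] [Algebra k A]
    [Ring B] [Algebra k B] (𝒜 : ℤ → Submodule k A) (ℬ : ℤ → Submodule k B)
    (dA : A →ₗ[k] A) (dB : B →ₗ[k] B) (f : A →ₐ[k] B) : Prop where
  map_mem : ∀ ⦃i : ℤ⦄ ⦃a : A⦄, a ∈ 𝒜 i → f a ∈ ℬ i
  map_d : ∀ a : A, f (dA a) = dB (f a)

/-- The compatibility conditions satisfied by a pair `(f, g)` from a DG Poisson algebra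
`A` to a DG algebra `B`: `f` is a DG algebra map, `g` is a degree-`0` `k`-linear map
commuting with the differentials which is a graded Lie algebra map into `B` with the
graded commutator, and the two mixed identities hold. -/
def UEACompat (k : Type) [Field k] {A B : Type} [Ring A] [Algebra k A]
    [Ring B] [Algebra k B] (𝒜 : ℤ → Submodule k A) (ℬ : ℤ → Submodule k B)
    (P : DGPoissonAlgebra k A 𝒜) (dB : B →ₗ[k] B)
    (f : A →ₐ[k] B) (g : A →ₗ[k] B) : Prop :=
  IsDGAlgebraMap k 𝒜 ℬ P.d dB f ∧
  (∀ ⦃i : ℤ⦄ ⦃a : A⦄, a ∈ 𝒜 i → g a ∈ ℬ i) ∧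
  (∀ a : A, g (P.d a) = dB (g a)) ∧
  (∀ ⦃i j : ℤ⦄ ⦃a b : A⦄, a ∈ 𝒜 i → b ∈ 𝒜 j →
    g (P.br a b) = g a * g b - sgn (i * j) • (g b * g a)) ∧
  (∀ ⦃i j : ℤ⦄ ⦃a b : A⦄, a ∈ 𝒜 i → b ∈ 𝒜 j →
    f (P.br a b) = g a * f b - sgn (i * j) • (f b * g a)) ∧
  (∀ ⦃i j : ℤ⦄ ⦃a b : A⦄, a ∈ 𝒜 i → b ∈ 𝒜 j →
    g (a * b) = f a * g b + sgn (i * j) • (f b * g a))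

/-- `(E, α, β)` is a universal enveloping algebra of the DG Poisson algebra `A`. -/
def IsUEA (k : Type) [Field k] {A E : Type} [Ring A] [Algebra k A] [Ring E] [Algebra k E]
    (𝒜 : ℤ → Submodule k A) (ℰ : ℤ → Submodule k E)
    (P : DGPoissonAlgebra k A 𝒜) (DE : DGAlgebra k E ℰ)
    (α : A →ₐ[k] E) (β : A →ₗ[k] E) : Prop :=
  UEACompat k 𝒜 ℰ P DE.d α β ∧
  ∀ (D : Type) [Ring D] [Algebra k D] (𝒟 : ℤ → Submodule k D) [GradedAlgebra 𝒟]
    (dD : DGAlgebra k D 𝒟) (f : A →ₐ[k] D) (g : A →ₗ[k] D),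
    UEACompat k 𝒜 𝒟 P dD.d f g →
    ∃! φ : E →ₐ[k] D, IsDGAlgebraMap k ℰ 𝒟 DE.d dD.d φ ∧
      φ.comp α = f ∧ φ.toLinearMap.comp β = g

/-- The two-sided ideal of `F` generated by a set `S`, as a `k`-submodule. -/
def idealGen (k : Type) [Field k] {F : Type} [Ring F] [Algebra k F] (S : Set F) :
    Submodule k F :=
  Submodule.span k {z : F | ∃ u v : F, ∃ s ∈ S, z = u * s * v}

/-- The left ideal of `F` generated by a set `S`, as a `k`-submodule. -/
def leftIdealGen (k : Type) [Field k] {F : Type} [Ring F] [Algebra k F] (S : Set F) :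
    Submodule k F :=
  Submodule.span k {z : F | ∃ u : F, ∃ s ∈ S, z = u * s}

/-- A submodule is graded if it is spanned by its homogeneous elements. -/
def IsGradedSubmodule (k : Type) [Field k] {A : Type} [AddCommGroup A] [Module k A]
    (𝒜 : ℤ → Submodule k A) (M : Submodule k A) : Prop :=
  M ≤ Submodule.span k {a : A | a ∈ M ∧ ∃ i, a ∈ 𝒜 i}

/-- A `k`-submodule which is a two-sided ideal. -/
def IsTwoSidedIdealSub (k : Type) [Field k] {A : Type} [Ring A] [Algebra k A]
    (M : Submodule k A) : Prop :=
  ∀ r : A, ∀ m ∈ M, r * m ∈ M ∧ m * r ∈ M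

/-- A DG ideal: a graded two-sided ideal closed under the differential `d`. -/
def IsDGIdeal (k : Type) [Field k] {A : Type} [Ring A] [Algebra k A]
    (𝒜 : ℤ → Submodule k A) (d : A →ₗ[k] A) (M : Submodule k A) : Prop :=
  IsTwoSidedIdealSub k M ∧ IsGradedSubmodule k 𝒜 M ∧ ∀ m ∈ M, d m ∈ M

/-- A DG Poisson ideal: a DG ideal which is also closed under the Poisson bracket. -/
def IsDGPoissonIdeal (k : Type) [Field k] {A : Type} [Ring A] [Algebra k A]
    (𝒜 : ℤ → Submodule k A) (P : DGPoissonAlgebra k A 𝒜) (M : Submodule k A) : Prop :=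
  IsDGIdeal k 𝒜 P.d M ∧ ∀ a : A, ∀ m ∈ M, P.br a m ∈ M

/-- `π : A → B` presents `B` as the quotient of `A` by `I`. -/
structure IsQuotientBy (k : Type) [Field k] {A B : Type} [Ring A] [Algebra k A]
    [Ring B] [Algebra k B] (π : A →ₐ[k] B) (I : Submodule k A) : Prop where
  surj : Function.Surjective π
  ker : ∀ a : A, π a = 0 ↔ a ∈ I

/-- The (noncommutative, ordered) monomial `x 0 ^ e 0 * x 1 ^ e 1 * ⋯` . -/
def xMono {n : ℕ} {R : Type} [Ring R] (x : Fin n → R) (e : Fin n → ℕ) : R :=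
  ((List.finRange n).map fun r => x r ^ e r).prod
/-- The scalar `△_i(m) ∈ k`: `△_i(2k) = k + k(-1)^{(2k-1)|x_i|²}` and
`△_i(2k+1) = k + 1 + k(-1)^{(2k-1)|x_i|²}`. -/
def tri (k : Type) [Field k] {n : ℕ} (w : Fin n → ℤ) (i : Fin n) (m : ℕ) : k :=
  if Even m then
    ((m / 2 : ℕ) : k) * (1 + (sgn (((m : ℤ) - 1) * (w i * w i)) : k))
  else
    ((m / 2 : ℕ) : k) + 1 + ((m / 2 : ℕ) : k) * (sgn (((m : ℤ) - 2) * (w i * w i)) : k)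


section StmtSixteenAux

lemma sgn_mul_self' (m : ℤ) : sgn m * sgn m = 1 := by
  unfold sgn; rw [← Units.val_mul, Int.units_mul_self]; rfl

lemma sgn_even' {m : ℤ} (h : Even m) : sgn m = 1 := by
  unfold sgn; rw [Int.negOnePow_even m h]; rfl

lemma sgn_add' (a b : ℤ) : sgn (a + b) = sgn a * sgn b := by
  unfold sgn; rw [Int.negOnePow_add, Units.val_mul]

lemma sgn_zero' : sgn 0 = 1 := by unfold sgn; simp

lemma sgn_smul_smul' {M : Type*} [AddCommGroup M] (m : ℤ) (X : M) :
    sgn m • sgn m • X = X := by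
  rw [smul_smul, sgn_mul_self', one_smul]

lemma sgn_add_two_mul' (a b : ℤ) : sgn ((a + 2) * b) = sgn (a * b) := by
  have h : (a + 2) * b = a * b + (b + b) := by ring
  rw [h, sgn_add', sgn_even' ⟨b, rfl⟩, mul_one]

lemma tri_zero' (k : Type) [Field k] {n : ℕ} (w : Fin n → ℤ) (i : Fin n) :
    tri k w i 0 = 0 := by simp [tri]

lemma tri_one' (k : Type) [Field k] {n : ℕ} (w : Fin n → ℤ) (i : Fin n) :
    tri k w i 1 = 1 := by
  have : ¬ Even 1 := by decide
  simp [tri, this]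

lemma tri_succ_aux (k : Type) [Field k] {n : ℕ} (w : Fin n → ℤ) (r : Fin n) (m : ℕ) :
    tri k w r (m + 1) = tri k w r m + ((sgn ((m : ℤ) * (w r * w r)) : ℤ) : k) := by
  rcases Nat.even_or_odd m with he | ho
  · obtain ⟨t, rfl⟩ := he
    have h1 : ¬ Even (t + t + 1) := by rw [Nat.even_add_one]; exact not_not_intro ⟨t, rfl⟩
    have h2 : (t + t + 1) / 2 = t := by omega
    have h3 : (t + t) / 2 = t := by omega
    have h4 : (((t + t + 1 : ℕ) : ℤ) - 2) * (w r * w r)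
        = (((t + t : ℕ) : ℤ) - 1) * (w r * w r) := by push_cast; ring
    have h5 : sgn (((t + t : ℕ) : ℤ) * (w r * w r)) = 1 :=
      sgn_even' ⟨(t : ℤ) * (w r * w r), by push_cast; ring⟩
    rw [tri, tri, if_neg h1, if_pos ⟨t, rfl⟩, h2, h3, h4, h5]
    push_cast
    ring
  · obtain ⟨t, rfl⟩ := ho
    have h1 : ¬ Even (2 * t + 1) := by rw [Nat.even_add_one]; exact not_not_intro ⟨t, by omega⟩
    have h2 : (2 * t + 1) / 2 = t := by omega
    have h3 : (2 * t + 1 + 1) / 2 = t + 1 := by omega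
    have h4 : Even (2 * t + 1 + 1) := ⟨t + 1, by omega⟩
    have hA : (((2 * t + 1 + 1 : ℕ) : ℤ) - 1) * (w r * w r)
        = ((2 * (t : ℤ) - 1) + 2) * (w r * w r) := by push_cast; ring
    have hB : (((2 * t + 1 : ℕ) : ℤ) - 2) * (w r * w r)
        = (2 * (t : ℤ) - 1) * (w r * w r) := by push_cast; ring
    have hC : ((2 * t + 1 : ℕ) : ℤ) * (w r * w r)
        = ((2 * (t : ℤ) - 1) + 2) * (w r * w r) := by push_cast; ring
    rw [tri, tri, if_pos h4, if_neg h1, h2, h3, hA, hB, hC, sgn_add_two_mul']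
    push_cast
    ring

lemma tri_pred (k : Type) [Field k] {n : ℕ} (w : Fin n → ℤ) (r : Fin n) (m : ℕ) (hm : m ≠ 0) :
    tri k w r m = tri k w r (m - 1) + ((sgn (((m : ℤ) - 1) * (w r * w r)) : ℤ) : k) := by
  obtain ⟨q, rfl⟩ : ∃ q, m = q + 1 := ⟨m - 1, by omega⟩
  have h : ((q + 1 : ℕ) : ℤ) - 1 = (q : ℤ) := by push_cast; ring
  rw [h]
  simpa using tri_succ_aux k w r q

lemma xMono_split {n : ℕ} {R : Type} [Ring R] (x : Fin n → R) (v : Fin n → ℕ) (r : Fin n)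
    (hv : ∀ l, r < l → v l = 0) :
    xMono x v = ((((List.finRange n).take r.val).map fun l => x l ^ v l)).prod * x r ^ v r := by
  unfold xMono
  have hlen : r.val < (List.finRange n).length := by
    rw [List.length_finRange]; exact r.isLt
  have hget : (List.finRange n)[r.val]'hlen = r := by
    rw [List.getElem_finRange]; ext; simp
  have hsplit : List.finRange n =
      (List.finRange n).take r.val ++ r :: (List.finRange n).drop (r.val + 1) := by
    conv_lhs => rw [← List.take_append_drop r.val (List.finRange n),
      List.drop_eq_getElem_cons hlen, hget]
  conv_lhs => rw [hsplit]
  rw [List.map_append, List.prod_append, List.map_cons, List.prod_cons]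
  have hdrop : (((List.finRange n).drop (r.val + 1)).map fun l => x l ^ v l).prod = 1 := by
    apply List.prod_eq_one
    intro y hy
    simp only [List.mem_map] at hy
    obtain ⟨l, hl, rfl⟩ := hy
    obtain ⟨i, hi, hil⟩ := List.mem_iff_getElem.1 hl
    have hrl : r < l := by
      rw [← hil, List.getElem_drop, List.getElem_finRange]
      rw [Fin.lt_def]
      simp
      omega
    rw [hv l hrl, pow_zero]
  rw [hdrop, mul_one]

lemma xMono_mul_single {n : ℕ} {R : Type} [Ring R] (x : Fin n → R) (v : Fin n → ℕ)
    (r : Fin n) (hv : ∀ l, r < l → v l = 0) :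
    xMono x v * x r = xMono x (Function.update v r (v r + 1)) := by
  have hv' : ∀ l, r < l → Function.update v r (v r + 1) l = 0 := by
    intro l hl
    rw [Function.update_of_ne (ne_of_gt hl)]
    exact hv l hl
  rw [xMono_split x v r hv, xMono_split x _ r hv']
  have hpre : (((List.finRange n).take r.val).map fun l => x l ^ Function.update v r (v r + 1) l)
      = ((List.finRange n).take r.val).map fun l => x l ^ v l := by
    apply List.map_congr_left
    intro l hl
    obtain ⟨i, hi, hil⟩ := List.mem_iff_getElem.1 hl
    have hlr : l ≠ r := by
      rw [← hil, List.getElem_take, List.getElem_finRange]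
      have hi' : i < r.val ⊓ (List.finRange n).length := by simpa using hi
      intro hc
      have := congrArg Fin.val hc
      simp at this
      omega
    rw [Function.update_of_ne hlr]
  rw [hpre, Function.update_self, mul_assoc, ← pow_succ]

lemma xMono_one {n : ℕ} {R : Type} [Ring R] (x : Fin n → R) (e : Fin n → ℕ)
    (he : ∀ l, e l = 0) : xMono x e = 1 := by
  apply List.prod_eq_one
  intro y hy
  simp only [List.mem_map] at hy
  obtain ⟨l, _, rfl⟩ := hy
  rw [he l, pow_zero]

lemma exists_max_nonzero {n : ℕ} (e : Fin n → ℕ) (h : ∑ l, e l ≠ 0) :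
    ∃ r, e r ≠ 0 ∧ ∀ l, r < l → e l = 0 := by
  have hne : (Finset.univ.filter fun l => e l ≠ 0).Nonempty := by
    by_contra hc
    rw [Finset.not_nonempty_iff_eq_empty, Finset.filter_eq_empty_iff] at hc
    exact h (Finset.sum_eq_zero fun l hl => by simpa using hc hl)
  refine ⟨(Finset.univ.filter fun l => e l ≠ 0).max' hne, ?_, ?_⟩
  · have := Finset.max'_mem _ hne
    simpa using this
  · intro l hl
    by_contra hc
    have hmem : l ∈ Finset.univ.filter fun l => e l ≠ 0 := by simpa using hc
    exact absurd (lt_of_le_of_lt (Finset.le_max' _ l hmem) hl) (lt_irrefl l)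

lemma keyA {k : Type} [Field k] {A B : Type} [Ring A] [Algebra k A] [Ring B] [Algebra k B]
    {𝒜 : ℤ → Submodule k A} (P : DGPoissonAlgebra k A 𝒜) (f : A →ₐ[k] B) (g : A →ₗ[k] B)
    (h5 : ∀ ⦃i j : ℤ⦄ ⦃a b : A⦄, a ∈ 𝒜 i → b ∈ 𝒜 j →
      f (P.br a b) = g a * f b - sgn (i * j) • (f b * g a))
    (h6 : ∀ ⦃i j : ℤ⦄ ⦃a b : A⦄, a ∈ 𝒜 i → b ∈ 𝒜 j →
      g (a * b) = f a * g b + sgn (i * j) • (f b * g a))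
    {i j : ℤ} {a b : A} (ha : a ∈ 𝒜 i) (hb : b ∈ 𝒜 j) :
    g (a * b) = g a * f b + sgn (i * j) • (g b * f a) := by
  have hs : sgn (j * i) = sgn (i * j) := by rw [mul_comm]
  have e1 : sgn (i * j) • (f b * g a) = g a * f b - f (P.br a b) := by
    rw [h5 ha hb]; abel
  have e2 : f a * g b = sgn (i * j) • (g b * f a) + f (P.br a b) := by
    have h5' := h5 hb ha
    rw [P.antisymm hb ha, map_neg, map_zsmul, hs] at h5'
    have h5'' : sgn (i * j) • (f a * g b) = g b * f a + sgn (i * j) • f (P.br a b) := by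
      rw [eq_sub_iff_add_eq] at h5'
      rw [← h5']; abel
    calc f a * g b = sgn (i * j) • sgn (i * j) • (f a * g b) := (sgn_smul_smul' _ _).symm
      _ = sgn (i * j) • (g b * f a + sgn (i * j) • f (P.br a b)) := by rw [h5'']
      _ = sgn (i * j) • (g b * f a) + f (P.br a b) := by rw [smul_add, sgn_smul_smul']
  rw [h6 ha hb, e1, e2]
  abel

end StmtSixteenAux

section StmtSixteenAux2

lemma xMono_mem_graded {k R : Type} [Field k] [Ring R] [Algebra k R] {n : ℕ}
    (𝒜 : ℤ → Submodule k R) [GradedAlgebra 𝒜] (x : Fin n → R) (w : Fin n → ℤ)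
    (hx : ∀ i, x i ∈ 𝒜 (w i)) :
    ∀ (N : ℕ) (e : Fin n → ℕ), ∑ l, e l = N → xMono x e ∈ 𝒜 (∑ l, (e l : ℤ) * w l) := by
  intro N
  induction N with
  | zero =>
    intro e he
    have h0 : ∀ l, e l = 0 := fun l => (Finset.sum_eq_zero_iff.1 he) l (Finset.mem_univ l)
    have hz : (∑ l, (e l : ℤ) * w l) = 0 := Finset.sum_eq_zero fun l _ => by rw [h0 l]; simp
    rw [hz, xMono_one x e h0]
    exact SetLike.one_mem_graded 𝒜
  | succ N IH =>
    intro e he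
    obtain ⟨r, hr0, hrmax⟩ := exists_max_nonzero e (by omega)
    set e' := Function.update e r (e r - 1) with he'def
    have he'max : ∀ l, r < l → e' l = 0 := fun l hl => by
      rw [he'def, Function.update_of_ne (ne_of_gt hl)]; exact hrmax l hl
    have hupdate : Function.update e' r (e' r + 1) = e := by
      funext l
      by_cases hl : l = r
      · subst hl; simp [he'def]; omega
      · simp [he'def, Function.update_of_ne hl]
    have hpeel : xMono x e = xMono x e' * x r := by
      rw [xMono_mul_single x e' r he'max, hupdate]
    have hsum' : ∑ l, e' l = N := by
      rw [he'def, Finset.sum_update_of_mem (Finset.mem_univ r)]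
      rw [← Finset.add_sum_erase Finset.univ e (Finset.mem_univ r)] at he
      rw [Finset.sdiff_singleton_eq_erase]
      omega
    have hdeg : (∑ l, (e l : ℤ) * w l) = (∑ l, (e' l : ℤ) * w l) + w r := by
      have hterm : ∀ l, (e l : ℤ) * w l = (e' l : ℤ) * w l + (if l = r then w r else 0) := by
        intro l; by_cases hl : l = r
        · subst hl
          rw [if_pos rfl, he'def, Function.update_self]
          have hc : ((e l - 1 : ℕ) : ℤ) = (e l : ℤ) - 1 := by omega
          rw [hc]; ring
        · rw [he'def, Function.update_of_ne hl, if_neg hl, add_zero]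
      rw [Finset.sum_congr rfl fun l _ => hterm l, Finset.sum_add_distrib,
        Finset.sum_ite_eq' Finset.univ r fun _ => w r, if_pos (Finset.mem_univ r)]
    rw [hpeel, hdeg]
    exact SetLike.mul_mem_graded (IH e' hsum') (hx r)

end StmtSixteenAux2

/-- In `R^e`, for all exponents `i_1, …, i_n ≥ 0`:
`h_R(x_1^{i_1} ⋯ x_n^{i_n}) = ∑_{r=1}^n (-1)^{(∑_{l<r} i_l|x_l|)·|x_r|} △_r(i_r)
y_r x_1^{i_1} ⋯ x_r^{i_r - 1} ⋯ x_n^{i_n}`, where `y_r = h_R(x_r)` and the `r`-th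
summand is `0` when `i_r = 0`. -/
theorem stmt16 (k R E : Type) [Field k] [Ring R] [Algebra k R] [Ring E] [Algebra k E]
    (n : ℕ) (𝒜 : ℤ → Submodule k R) [GradedAlgebra 𝒜]
    (ℰ : ℤ → Submodule k E) [GradedAlgebra ℰ]
    (P : DGPoissonAlgebra k R 𝒜)
    (x : Fin n → R) (w : Fin n → ℤ) (hx : ∀ i, x i ∈ 𝒜 (w i))
    (hgen : Algebra.adjoin k (Set.range x) = ⊤)
    (DE : DGAlgebra k E ℰ) (mR : R →ₐ[k] E) (hR : R →ₗ[k] E)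
    (hUEA : IsUEA k 𝒜 ℰ P DE mR hR) :
    ∀ e : Fin n → ℕ,
      hR (xMono x e) =
        ∑ r : Fin n,
          sgn ((∑ l ∈ Finset.univ.filter (fun l => l < r), (e l : ℤ) * w l) * w r) •
            (tri k w r (e r) •
              (hR (x r) * mR (xMono x (Function.update e r (e r - 1))))) := by
  obtain ⟨⟨hfdg, hgmem, hgd, h4, h5, h6⟩, -⟩ := hUEA
  have key : ∀ ⦃i j : ℤ⦄ ⦃a b : R⦄, a ∈ 𝒜 i → b ∈ 𝒜 j →
      hR (a * b) = hR a * mR b + sgn (i * j) • (hR b * mR a) :=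
    fun i j a b ha hb => keyA P mR hR h5 h6 ha hb
  have hone : hR (1 : R) = 0 := by
    have h := key (SetLike.one_mem_graded 𝒜) (SetLike.one_mem_graded 𝒜)
    simp only [mul_one, map_one, mul_zero, sgn_zero', one_smul] at h
    nth_rewrite 1 [← add_zero (hR 1)] at h
    exact (add_left_cancel h).symm
  have assemble : ∀ (r : Fin n) (F T : Fin n → E) (X : E), (∀ s, s ≠ r → F s = T s) →
      F r + X = T r → (∑ s, F s) + X = ∑ s, T s := by
    intro r F T X h1 h2
    rw [← Finset.add_sum_erase Finset.univ F (Finset.mem_univ r),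
      ← Finset.add_sum_erase Finset.univ T (Finset.mem_univ r),
      Finset.sum_congr rfl (fun s hs => h1 s (Finset.ne_of_mem_erase hs))]
    rw [← h2]; abel
  suffices H : ∀ (N : ℕ) (e : Fin n → ℕ), ∑ l, e l = N →
      hR (xMono x e) =
        ∑ r : Fin n,
          sgn ((∑ l ∈ Finset.univ.filter (fun l => l < r), (e l : ℤ) * w l) * w r) •
            (tri k w r (e r) •
              (hR (x r) * mR (xMono x (Function.update e r (e r - 1))))) by
    intro e; exact H _ e rfl
  intro N
  induction N with
  | zero =>
    intro e he
    have h0 : ∀ l, e l = 0 := fun l => (Finset.sum_eq_zero_iff.1 he) l (Finset.mem_univ l)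
    rw [xMono_one x e h0, hone]
    refine (Finset.sum_eq_zero fun s _ => ?_).symm
    rw [h0 s, tri_zero', zero_smul, smul_zero]
  | succ N IH =>
    intro e he
    obtain ⟨r, hr0, hrmax⟩ := exists_max_nonzero e (by omega)
    set e' := Function.update e r (e r - 1) with he'def
    have he'max : ∀ l, r < l → e' l = 0 := fun l hl => by
      rw [he'def, Function.update_of_ne (ne_of_gt hl)]; exact hrmax l hl
    have hupdate : Function.update e' r (e' r + 1) = e := by
      funext l
      by_cases hl : l = r
      · subst hl; simp [he'def]; omega
      · simp [he'def, Function.update_of_ne hl]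
    have hpeel : xMono x e = xMono x e' * x r := by
      rw [xMono_mul_single x e' r he'max, hupdate]
    have hsum' : ∑ l, e' l = N := by
      rw [he'def, Finset.sum_update_of_mem (Finset.mem_univ r)]
      rw [← Finset.add_sum_erase Finset.univ e (Finset.mem_univ r)] at he
      rw [Finset.sdiff_singleton_eq_erase]
      omega
    have hdegmem := xMono_mem_graded 𝒜 x w hx N e' hsum'
    rw [hpeel, key hdegmem (hx r), IH e' hsum', Finset.sum_mul]
    simp only [smul_mul_assoc, mul_assoc, ← map_mul]
    apply assemble r
    · -- off-diagonal terms
      intro s hs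
      by_cases hsr : s < r
      · -- s < r : coefficients agree, monomials combine
        have hcoef : (∑ l ∈ Finset.univ.filter (fun l => l < s), (e' l : ℤ) * w l)
            = ∑ l ∈ Finset.univ.filter (fun l => l < s), (e l : ℤ) * w l := by
          refine Finset.sum_congr rfl fun l hl => ?_
          have hls : l < s := (Finset.mem_filter.1 hl).2
          rw [he'def, Function.update_of_ne (ne_of_lt (lt_trans hls hsr))]
        have htri : tri k w s (e' s) = tri k w s (e s) := by
          rw [he'def, Function.update_of_ne hs]
        have hmax2 : ∀ l, r < l → Function.update e' s (e' s - 1) l = 0 := by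
          intro l hl
          rw [Function.update_of_ne (ne_of_gt (lt_trans hsr hl))]
          exact he'max l hl
        have hmono : xMono x (Function.update e' s (e' s - 1)) * x r
            = xMono x (Function.update e s (e s - 1)) := by
          rw [xMono_mul_single x _ r hmax2]
          congr 1
          funext l
          by_cases hlr : l = r
          · subst hlr
            rw [Function.update_self, Function.update_of_ne (Ne.symm hs),
              Function.update_of_ne (Ne.symm hs), he'def, Function.update_self]
            omega
          · rw [Function.update_of_ne hlr]
            by_cases hls : l = s
            · subst hls
              rw [Function.update_self, Function.update_self, he'def,
                Function.update_of_ne hs]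
            · rw [Function.update_of_ne hls, Function.update_of_ne hls, he'def,
                Function.update_of_ne hlr]
        rw [hcoef, htri, hmono]
      · -- s > r : both sides vanish since e s = 0
        have hrs : r < s := lt_of_le_of_ne (le_of_not_gt hsr) (Ne.symm hs)
        have hes : e s = 0 := hrmax s hrs
        have hes' : e' s = 0 := he'max s hrs
        simp only [hes, hes', tri_zero', zero_smul, smul_zero]
    · -- diagonal term
      have hp' : (∑ l ∈ Finset.univ.filter (fun l => l < r), (e' l : ℤ) * w l)
          = ∑ l ∈ Finset.univ.filter (fun l => l < r), (e l : ℤ) * w l := by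
        refine Finset.sum_congr rfl fun l hl => ?_
        have hlr : l < r := (Finset.mem_filter.1 hl).2
        rw [he'def, Function.update_of_ne (ne_of_lt hlr)]
      set p := ∑ l ∈ Finset.univ.filter (fun l => l < r), (e l : ℤ) * w l with hpdef
      have hd' : (∑ l, (e' l : ℤ) * w l) = p + ((e r : ℤ) - 1) * w r := by
        rw [← Finset.sum_filter_add_sum_filter_not Finset.univ (fun l => l < r)
          (fun l => (e' l : ℤ) * w l), hp']
        congr 1
        rw [Finset.sum_eq_single_of_mem r (by simp)]
        · rw [he'def, Function.update_self]
          have hc : ((e r - 1 : ℕ) : ℤ) = (e r : ℤ) - 1 := by omega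
          rw [hc]
        · intro l hl hlr
          have : r < l := by
            rcases Finset.mem_filter.1 hl with ⟨-, h2⟩
            exact lt_of_le_of_ne (le_of_not_gt h2) (Ne.symm hlr)
          rw [he'max l this]
          simp
      have herr : e' r = e r - 1 := by rw [he'def, Function.update_self]
      by_cases hcase : e r = 1
      · -- e r = 1 : the IH diagonal term vanishes
        have h0 : e' r = 0 := by omega
        rw [h0, tri_zero', zero_smul, smul_zero, zero_add, hd']
        rw [hcase, tri_one', one_smul]
        have hre : Function.update e r 0 = e' := by rw [he'def, hcase]
        rw [hre]
        norm_num
      · -- e r ≥ 2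
        have hmono : xMono x (Function.update e' r (e' r - 1)) * x r = xMono x e' := by
          have hmax2 : ∀ l, r < l → Function.update e' r (e' r - 1) l = 0 := by
            intro l hl
            rw [Function.update_of_ne (ne_of_gt hl)]
            exact he'max l hl
          rw [xMono_mul_single x _ r hmax2]
          congr 1
          funext l
          by_cases hlr : l = r
          · subst hlr
            rw [Function.update_self, Function.update_self, herr]
            omega
          · rw [Function.update_of_ne hlr, Function.update_of_ne hlr]
        rw [hp', hmono, hd', herr]
        -- now a scalar identity
        have hsplit : (p + ((e r : ℤ) - 1) * w r) * w r
            = p * w r + (((e r : ℤ) - 1) * (w r * w r)) := by ring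
        rw [hsplit, sgn_add']
        have hq : tri k w r (e r)
            = tri k w r (e r - 1) + ((sgn (((e r : ℤ) - 1) * (w r * w r)) : ℤ) : k) :=
          tri_pred k w r (e r) hr0
        rw [hq]
        simp only [← Int.cast_smul_eq_zsmul k, smul_smul]
        rw [← add_smul]
        congr 1
        push_cast
        ring
end
end

section
/- Assume that either char k = 2 or every |x_i| is even, so that R^e is a free right R-module with basis 𝔠 = {y_1^{l_1} y_2^{l_2} ... y_n^{l_n} : l_r ≥ 0}. For any exponents j_1, ..., j_n ≥ 0 and i_1, ..., i_n ≥ 0, write the element z = y_1^{j_1} y_2^{j_2} ... y_n^{j_n} h_R(x_1^{i_1} x_2^{i_2} ... x_n^{i_n}) of R^e uniquely as z = Σ_{Y in 𝔠} Y a_Y with a_Y in R. Then a_1 = 0, i.e. the coefficient of the empty monomial 1 in this expansion is zero. -/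
noncomputable section

open scoped DirectSum

/-!
Under the sign hypothesis all relations of `R^e` are plain commutator relations:
`y_t m(a) - m(a) y_t = m{x_t, a}` and `y_t y_s - y_s y_t = h{x_t, x_s}`, where `y_t = h(x_t)`.
The Leibniz rule `h(x_u b) = m(x_u) h(b) + m(b) y_u` gives `h(b) = ∑_r y_r m(c_r)` with
`{x_t, b} = ∑_r {x_t, x_r} c_r`; the constant terms created by moving `m(x_u)` past the `y_r`
cancel by antisymmetry of the bracket. Moving `y_t` into an ordered monomial `y^l m(r)` only
produces ordered monomials of positive degree (induction on `|l|`, then on `t`), so the right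
ideal `∑_t y_t R^e` has no component along `1`; and `y^j h(x^e)` lies in that ideal.
-/

lemma sgn_smul_of_even_or_char_two {k M : Type} [Field k] [AddCommGroup M] [Module k M]
    {i : ℤ} (h : Even i ∨ ringChar k = 2) (j : ℤ) (z : M) : sgn (i * j) • z = z := by
  rcases h with h | h
  · simp [sgn, Int.negOnePow_even _ (h.mul_right j)]
  · have : CharP k 2 := h ▸ ringChar.charP k
    rcases Int.units_eq_one_or (Int.negOnePow (i * j)) with hs | hs
    · simp [sgn, hs]
    · simp only [sgn, hs, Units.val_neg, Units.val_one, neg_smul, one_smul]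
      rw [← neg_one_smul k z, CharTwo.neg_eq, one_smul]

section Monomial

variable {n : ℕ} {R : Type} [Ring R]

@[simp]
lemma xMono_zero (v : Fin n → R) : xMono v 0 = 1 := by
  simp [xMono]

lemma xMono_succ (v : Fin (n + 1) → R) (l : Fin (n + 1) → ℕ) :
    xMono v l = v 0 ^ l 0 * xMono (fun i => v i.succ) (fun i => l i.succ) := by
  simp [xMono, List.finRange_succ, Function.comp_def]

lemma xMono_add_single (v : Fin n → R) (l : Fin n → ℕ) (u : Fin n) (h : ∀ s < u, l s = 0) :
    xMono v (l + Pi.single u 1) = v u * xMono v l := by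
  induction n with
  | zero => exact u.elim0
  | succ n ih =>
    rw [xMono_succ, xMono_succ v l]
    induction u using Fin.cases with
    | zero => simp [pow_succ', mul_assoc]
    | succ u =>
      have h0 : l 0 = 0 := h 0 (Fin.succ_pos u)
      have hl : (fun i => (l + Pi.single (M := fun _ => ℕ) u.succ 1) i.succ) =
          (fun i => l i.succ) + Pi.single u 1 := by
        ext i; simp [Pi.single_apply]
      rw [hl, ih _ _ u (fun s hs => h s.succ (by simpa))]
      simp [h0]

lemma xMono_single_one (v : Fin n → R) (t : Fin n) : xMono v (Pi.single t 1) = v t := by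
  simpa using xMono_add_single v 0 t (fun _ _ => rfl)

end Monomial

lemma Pi.exists_eq_add_single_one_of_ne_zero {n : ℕ} {l : Fin n → ℕ} (hl : l ≠ 0) :
    ∃ (u : Fin n) (l' : Fin n → ℕ), (∀ s < u, l' s = 0) ∧ l = l' + Pi.single u 1 := by
  have hne : (Finset.univ.filter fun s => l s ≠ 0).Nonempty := by
    obtain ⟨s, hs⟩ := Function.ne_iff.1 hl
    exact ⟨s, by simpa using hs⟩
  set u := (Finset.univ.filter fun s => l s ≠ 0).min' hne
  have hu : l u ≠ 0 := by simpa using Finset.min'_mem _ hne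
  refine ⟨u, l - Pi.single u 1, fun s hs => ?_, ?_⟩
  · have : l s = 0 := by
      by_contra h
      exact not_le.2 hs (Finset.min'_le _ s (by simpa using h))
    simp [this]
  · ext s
    rcases eq_or_ne s u with rfl | hs
    · simp only [Pi.add_apply, Pi.sub_apply, Pi.single_eq_same]
      omega
    · simp [hs]

lemma Pi.sum_add_single_one {n : ℕ} (l : Fin n → ℕ) (u : Fin n) :
    ∑ i, (l + Pi.single u 1 : Fin n → ℕ) i = ∑ i, l i + 1 := by
  simp [Finset.sum_add_distrib]

section Filtration

variable (k : Type) {E R : Type} [CommRing k] [Ring E] [Algebra k E] [Ring R] [Algebra k R]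
  {n : ℕ} (y : Fin n → E) (m : R →ₐ[k] E)

def monomialSpan (p : (Fin n → ℕ) → Prop) : Submodule k E :=
  Submodule.span k {z | ∃ l r, p l ∧ z = xMono y l * m r}

variable {k y m}

lemma monomial_mem_monomialSpan {p : (Fin n → ℕ) → Prop} {l : Fin n → ℕ} (hl : p l) (r : R) :
    xMono y l * m r ∈ monomialSpan k y m p :=
  Submodule.subset_span ⟨l, r, hl, rfl⟩

lemma monomialSpan_mono {p q : (Fin n → ℕ) → Prop} (h : ∀ l, p l → q l) :
    monomialSpan k y m p ≤ monomialSpan k y m q :=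
  Submodule.span_mono fun _ ⟨l, r, hl, hz⟩ => ⟨l, r, h l hl, hz⟩

lemma mul_mem_of_forall_monomial {p : (Fin n → ℕ) → Prop} {T : Submodule k E} (c : E)
    (h : ∀ l r, p l → c * (xMono y l * m r) ∈ T) {z : E} (hz : z ∈ monomialSpan k y m p) :
    c * z ∈ T :=
  (Submodule.span_le (p := T.comap (LinearMap.mulLeft k c))).2
    (by rintro _ ⟨l, r, hl, rfl⟩; exact h l r hl) hz

local notation "𝓕[" d "]" => monomialSpan k y m (fun l => ∑ i, l i ≤ d)
local notation "𝓕⁺[" d "]" => monomialSpan k y m (fun l => l ≠ 0 ∧ ∑ i, l i ≤ d)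

lemma mul_mem_filtration_of_lt (hym : ∀ t a, ∃ b, m a * y t = y t * m a + m b) {d : ℕ}
    (ih : ∀ d' < d, (∀ a, ∀ z ∈ 𝓕[d'], m a * z ∈ 𝓕[d']) ∧
      ∀ t, ∀ z ∈ 𝓕[d'], y t * z ∈ 𝓕⁺[d' + 1])
    (a : R) {z : E} (hz : z ∈ 𝓕[d]) : m a * z ∈ 𝓕[d] := by
  refine mul_mem_of_forall_monomial _ (fun l r hl => ?_) hz
  rcases eq_or_ne l 0 with rfl | hl0
  · simpa [← map_mul] using monomial_mem_monomialSpan (y := y) (m := m)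
      (p := fun l => ∑ i, l i ≤ d) (l := 0) (by simp) (a * r)
  obtain ⟨u, l, hlu, rfl⟩ := Pi.exists_eq_add_single_one_of_ne_zero hl0
  rw [Pi.sum_add_single_one] at hl
  obtain ⟨b, hb⟩ := hym u a
  obtain ⟨ihm, ihy⟩ := ih (∑ i, l i) (by omega)
  have hmem := monomial_mem_monomialSpan (y := y) (m := m)
    (p := fun l' => ∑ i, l' i ≤ ∑ i, l i) le_rfl r
  have : m a * (xMono y (l + Pi.single u 1) * m r) =
      y u * (m a * (xMono y l * m r)) + m b * (xMono y l * m r) := by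
    rw [xMono_add_single y l u hlu, ← mul_assoc, ← mul_assoc, hb]
    simp only [add_mul, mul_assoc]
  rw [this]
  exact add_mem
    (monomialSpan_mono (fun _ h => by omega) (ihy u _ (ihm a _ hmem)))
    (monomialSpan_mono (fun _ h => by omega) (ihm b _ hmem))

lemma gen_mul_mem_filtration_of_lt
    (hyy : ∀ t s, y t * y s - y s * y t ∈ Submodule.span k {z | ∃ i a, z = y i * m a})
    {d : ℕ}
    (ih : ∀ d' < d, (∀ a, ∀ z ∈ 𝓕[d'], m a * z ∈ 𝓕[d']) ∧
      ∀ t, ∀ z ∈ 𝓕[d'], y t * z ∈ 𝓕⁺[d' + 1])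
    (t : Fin n) {z : E} (hz : z ∈ 𝓕[d]) : y t * z ∈ 𝓕⁺[d + 1] := by
  induction t using WellFoundedLT.induction generalizing z with
  | _ t iht =>
  refine mul_mem_of_forall_monomial _ (fun l r hl => ?_) hz
  rcases eq_or_ne l 0 with rfl | hl0
  · rw [xMono_zero, one_mul, ← xMono_single_one y t]
    exact monomial_mem_monomialSpan ⟨by simp, by simp⟩ r
  obtain ⟨u, l, hlu, rfl⟩ := Pi.exists_eq_add_single_one_of_ne_zero hl0
  rw [Pi.sum_add_single_one] at hl
  obtain ⟨ihm, ihy⟩ := ih (∑ i, l i) (by omega)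
  have hmem := monomial_mem_monomialSpan (y := y) (m := m)
    (p := fun l' => ∑ i, l' i ≤ ∑ i, l i) le_rfl r
  rcases le_or_gt t u with htu | hut
  · have hlt : ∀ s < t, (l + Pi.single u 1 : Fin n → ℕ) s = 0 := fun s hs => by
      simp [(hs.trans_le htu).ne, hlu s (hs.trans_le htu)]
    rw [← mul_assoc, ← xMono_add_single y _ t hlt]
    refine monomial_mem_monomialSpan
      ⟨fun h => ?_, by rw [Pi.sum_add_single_one, Pi.sum_add_single_one]; omega⟩ r
    simpa using congrFun h t
  rw [xMono_add_single y l u hlu]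
  have : y t * (y u * xMono y l * m r) = y u * (y t * (xMono y l * m r)) +
      (y t * y u - y u * y t) * (xMono y l * m r) := by
    noncomm_ring
  rw [this]
  refine add_mem (iht u hut (monomialSpan_mono (fun _ h => by omega) (ihy t _ hmem))) ?_
  refine (Submodule.span_le (p := (𝓕⁺[d + 1]).comap
    (LinearMap.mulRight k (xMono y l * m r)))).2 ?_ (hyy t u)
  rintro _ ⟨i, a, rfl⟩
  simp only [SetLike.mem_coe, Submodule.mem_comap, LinearMap.mulRight_apply, mul_assoc]
  exact monomialSpan_mono (fun _ h => ⟨h.1, by omega⟩) (ihy i _ (ihm a _ hmem))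

theorem mul_mem_filtration (hym : ∀ t a, ∃ b, m a * y t = y t * m a + m b)
    (hyy : ∀ t s, y t * y s - y s * y t ∈ Submodule.span k {z | ∃ i a, z = y i * m a})
    (d : ℕ) :
    (∀ a, ∀ z ∈ 𝓕[d], m a * z ∈ 𝓕[d]) ∧ ∀ t, ∀ z ∈ 𝓕[d], y t * z ∈ 𝓕⁺[d + 1] := by
  induction d using Nat.strong_induction_on with
  | _ d ih =>
    exact ⟨fun a _ => mul_mem_filtration_of_lt hym ih a,
      fun t _ => gen_mul_mem_filtration_of_lt hyy ih t⟩

theorem mul_mem_monomialSpan_ne_zero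
    (hym : ∀ t a, ∃ b, m a * y t = y t * m a + m b)
    (hyy : ∀ t s, y t * y s - y s * y t ∈ Submodule.span k {z | ∃ i a, z = y i * m a})
    (hspan : ∀ z : E, ∃ c : (Fin n → ℕ) →₀ R, z = c.sum fun l r => xMono y l * m r)
    (t : Fin n) (z : E) : y t * z ∈ monomialSpan k y m (· ≠ 0) := by
  obtain ⟨c, rfl⟩ := hspan z
  rw [Finsupp.sum, Finset.mul_sum]
  refine Submodule.sum_mem _ fun l _ => ?_
  have hmem := monomial_mem_monomialSpan (y := y) (m := m)
    (p := fun l' => ∑ i, l' i ≤ ∑ i, l i) le_rfl (c l)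
  exact monomialSpan_mono (fun _ h => h.1) ((mul_mem_filtration hym hyy _).2 t _ hmem)

theorem coeff_zero_eq_zero_of_mem_monomialSpan
    (hind : ∀ c : (Fin n → ℕ) →₀ R, (c.sum fun l r => xMono y l * m r) = 0 → c = 0)
    {c : (Fin n → ℕ) →₀ R}
    (hc : (c.sum fun l r => xMono y l * m r) ∈ monomialSpan k y m (· ≠ 0)) : c 0 = 0 := by
  let Φ : ((Fin n → ℕ) →₀ R) →ₗ[k] E :=
    Finsupp.lsum k fun l => (LinearMap.mulLeft k (xMono y l)).comp m.toLinearMap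
  have hΦ : ∀ c, Φ c = c.sum fun l r => xMono y l * m r := fun _ => rfl
  have hle : monomialSpan k y m (· ≠ 0) ≤ (Finsupp.supported R k {l | l ≠ 0}).map Φ := by
    refine Submodule.span_le.2 ?_
    rintro _ ⟨l, r, hl, rfl⟩
    exact ⟨Finsupp.single l r, Finsupp.single_mem_supported k r hl, by simp [hΦ]⟩
  obtain ⟨c', hc', hΦc'⟩ := hle hc
  obtain rfl : c' = c := sub_eq_zero.1 <| hind _ <| by rw [← hΦ, map_sub, hΦc', hΦ, sub_self]
  by_contra h
  exact (Finsupp.mem_supported k c').1 hc' (Finsupp.mem_support_iff.2 h) rfl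

end Filtration

section SignTrivial

variable {k R B : Type} [Field k] [Ring R] [Algebra k R] [Ring B] [Algebra k B]
  {𝒜 : ℤ → Submodule k R} {ℬ : ℤ → Submodule k B} {dB : B →ₗ[k] B}
  {f : R →ₐ[k] B} {g : R →ₗ[k] B} {a b : R} {i j : ℤ}

lemma DGPoissonAlgebra.br_swap_of_mem (P : DGPoissonAlgebra k R 𝒜) (ha : a ∈ 𝒜 i)
    (hi : Even i ∨ ringChar k = 2) (hb : b ∈ 𝒜 j) : P.br a b = -P.br b a := by
  rw [P.antisymm ha hb, sgn_smul_of_even_or_char_two hi]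

lemma UEACompat.br_of_mem {P : DGPoissonAlgebra k R 𝒜} (hfg : UEACompat k 𝒜 ℬ P dB f g)
    (ha : a ∈ 𝒜 i) (hi : Even i ∨ ringChar k = 2) (hb : b ∈ 𝒜 j) :
    g (P.br a b) = g a * g b - g b * g a := by
  rw [hfg.2.2.2.1 ha hb, sgn_smul_of_even_or_char_two hi]

variable [GradedAlgebra 𝒜]

namespace DGPoissonAlgebra

lemma mul_comm_of_mem (P : DGPoissonAlgebra k R 𝒜) (ha : a ∈ 𝒜 i) (hi : Even i ∨ ringChar k = 2)
    (b : R) :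
    a * b = b * a := by
  induction b using DirectSum.Decomposition.inductionOn 𝒜 with
  | zero => simp
  | homogeneous b => exact (P.gcomm ha b.2).trans (sgn_smul_of_even_or_char_two hi _ _)
  | add b b' h h' => rw [mul_add, add_mul, h, h']

lemma br_mul_of_mem (P : DGPoissonAlgebra k R 𝒜) (ha : a ∈ 𝒜 i) (hi : Even i ∨ ringChar k = 2)
    (hb : b ∈ 𝒜 j) (c : R) :
    P.br a (b * c) = P.br a b * c + b * P.br a c := by
  induction c using DirectSum.Decomposition.inductionOn 𝒜 with
  | zero => simp
  | homogeneous c => rw [P.leibniz ha hb c.2, sgn_smul_of_even_or_char_two hi]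
  | add c c' h h' => rw [mul_add, map_add, h, h', map_add, mul_add, mul_add]; abel

lemma br_one_of_mem (P : DGPoissonAlgebra k R 𝒜) (ha : a ∈ 𝒜 i) (hi : Even i ∨ ringChar k = 2) :
    P.br a 1 = 0 := by
  simpa using P.br_mul_of_mem ha hi (SetLike.GradedOne.one_mem (A := 𝒜)) 1

end DGPoissonAlgebra

namespace UEACompat

variable {P : DGPoissonAlgebra k R 𝒜}

lemma map_br_of_mem (hfg : UEACompat k 𝒜 ℬ P dB f g) (ha : a ∈ 𝒜 i) (hi : Even i ∨ ringChar k = 2)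
    (b : R) :
    f (P.br a b) = g a * f b - f b * g a := by
  induction b using DirectSum.Decomposition.inductionOn 𝒜 with
  | zero => simp
  | homogeneous b => rw [hfg.2.2.2.2.1 ha b.2, sgn_smul_of_even_or_char_two hi]
  | add b b' h h' => rw [map_add, map_add, h, h', map_add, mul_add, add_mul]; abel

lemma mul_of_mem (hfg : UEACompat k 𝒜 ℬ P dB f g) (ha : a ∈ 𝒜 i) (hi : Even i ∨ ringChar k = 2)
    (b : R) :
    g (a * b) = f a * g b + f b * g a := by
  induction b using DirectSum.Decomposition.inductionOn 𝒜 with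
  | zero => simp
  | homogeneous b => rw [hfg.2.2.2.2.2 ha b.2, sgn_smul_of_even_or_char_two hi]
  | add b b' h h' => rw [mul_add, map_add, h, h', map_add, map_add, mul_add, add_mul]; abel

lemma map_one_eq_zero (hfg : UEACompat k 𝒜 ℬ P dB f g) : g 1 = 0 := by
  simpa using hfg.mul_of_mem (SetLike.GradedOne.one_mem (A := 𝒜)) (Or.inl Even.zero) 1

variable {n : ℕ} {x : Fin n → R} {w : Fin n → ℤ}

lemma exists_eq_sum_gen_mul (hfg : UEACompat k 𝒜 ℬ P dB f g) (hx : ∀ i, x i ∈ 𝒜 (w i))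
    (hw : ∀ i, Even (w i) ∨ ringChar k = 2) (u : Fin n) {b : R} {c : Fin n → R}
    (hg : g b = ∑ r, g (x r) * f (c r))
    (hbr : ∀ t, P.br (x t) b = ∑ r, P.br (x t) (x r) * c r) :
    ∃ c' : Fin n → R, g (x u * b) = ∑ r, g (x r) * f (c' r) ∧
      ∀ t, P.br (x t) (x u * b) = ∑ r, P.br (x t) (x r) * c' r := by
  refine ⟨fun r => x u * c r + if r = u then b else 0, ?_, fun t => ?_⟩
  · have hterm : ∀ r, f (x u) * (g (x r) * f (c r)) =
        g (x r) * f (x u * c r) - f (P.br (x r) (x u) * c r) := by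
      intro r
      rw [map_mul, map_mul, hfg.map_br_of_mem (hx r) (hw r)]
      noncomm_ring
    have hcancel : ∑ r, f (P.br (x r) (x u) * c r) = -f (P.br (x u) b) := by
      rw [hbr u, map_sum, ← Finset.sum_neg_distrib]
      refine Finset.sum_congr rfl fun r _ => ?_
      rw [P.br_swap_of_mem (hx r) (hw r) (hx u), neg_mul, map_neg]
    rw [hfg.mul_of_mem (hx u) (hw u), hg, Finset.mul_sum, Finset.sum_congr rfl fun r _ => hterm r,
      Finset.sum_sub_distrib, hcancel, hfg.map_br_of_mem (hx u) (hw u)]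
    simp only [apply_ite f, map_zero, mul_ite, mul_zero, map_add, mul_add,
      Finset.sum_add_distrib, Finset.sum_ite_eq', Finset.mem_univ, if_true]
    abel
  · rw [P.br_mul_of_mem (hx t) (hw t) (hx u), hbr t, Finset.mul_sum]
    simp [mul_add, Finset.sum_add_distrib, ← mul_assoc, P.mul_comm_of_mem (hx u) (hw u), add_comm]

lemma exists_eq_sum_of_mem_adjoin (hfg : UEACompat k 𝒜 ℬ P dB f g)
    (hx : ∀ i, x i ∈ 𝒜 (w i)) (hw : ∀ i, Even (w i) ∨ ringChar k = 2) {b : R}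
    (hb : b ∈ Algebra.adjoin k (Set.range x)) :
    ∃ c : Fin n → R, g b = ∑ r, g (x r) * f (c r) ∧
      ∀ t, P.br (x t) b = ∑ r, P.br (x t) (x r) * c r := by
  rw [← Subalgebra.mem_toSubmodule, Algebra.adjoin_eq_span] at hb
  induction hb using Submodule.span_induction with
  | mem b hb =>
    induction hb using Submonoid.closure_induction_left with
    | one =>
      exact ⟨0, by simp [hfg.map_one_eq_zero], fun t => by simp [P.br_one_of_mem (hx t) (hw t)]⟩
    | mul_left _ hu b _ ih =>
      obtain ⟨u, rfl⟩ := hu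
      obtain ⟨c, hg, hbr⟩ := ih
      exact hfg.exists_eq_sum_gen_mul hx hw u hg hbr
  | zero => exact ⟨0, by simp, by simp⟩
  | add b b' _ _ ih ih' =>
    obtain ⟨c, hg, hbr⟩ := ih
    obtain ⟨c', hg', hbr'⟩ := ih'
    exact ⟨c + c', by simp [hg, hg', mul_add, Finset.sum_add_distrib],
      fun t => by simp [hbr, hbr', mul_add, Finset.sum_add_distrib]⟩
  | smul a b _ ih =>
    obtain ⟨c, hg, hbr⟩ := ih
    exact ⟨a • c, by simp [hg, Finset.smul_sum], fun t => by simp [hbr, Finset.smul_sum]⟩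

lemma mem_span_gen_mul_of_mem_adjoin (hfg : UEACompat k 𝒜 ℬ P dB f g)
    (hx : ∀ i, x i ∈ 𝒜 (w i)) (hw : ∀ i, Even (w i) ∨ ringChar k = 2) {b : R}
    (hb : b ∈ Algebra.adjoin k (Set.range x)) :
    g b ∈ Submodule.span k {z | ∃ s a, z = g (x s) * f a} := by
  obtain ⟨c, hc, -⟩ := hfg.exists_eq_sum_of_mem_adjoin hx hw hb
  rw [hc]
  exact Submodule.sum_mem _ fun r _ => Submodule.subset_span ⟨r, c r, rfl⟩

end UEACompat

end SignTrivial

theorem stmt17_general (k R E : Type) [Field k] [Ring R] [Algebra k R] [Ring E] [Algebra k E]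
    (n : ℕ) (𝒜 : ℤ → Submodule k R) [GradedAlgebra 𝒜]
    (ℰ : ℤ → Submodule k E)
    (P : DGPoissonAlgebra k R 𝒜)
    (x : Fin n → R) (w : Fin n → ℤ) (hx : ∀ i, x i ∈ 𝒜 (w i))
    (hgen : Algebra.adjoin k (Set.range x) = ⊤)
    (hchar : ringChar k = 2 ∨ ∀ i, Even (w i))
    (DE : DGAlgebra k E ℰ) (mR : R →ₐ[k] E) (hR : R →ₗ[k] E)
    (hUEA : IsUEA k 𝒜 ℰ P DE mR hR)
    -- `R^e` is a free right `R`-module with basis `𝔠`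
    (hfree_ind : ∀ c : (Fin n → ℕ) →₀ R,
      (c.sum fun l r => xMono (fun s => hR (x s)) l * mR r) = 0 → c = 0)
    (hfree_span : ∀ z : E, ∃ c : (Fin n → ℕ) →₀ R,
      z = c.sum fun l r => xMono (fun s => hR (x s)) l * mR r) :
    ∀ (j e : Fin n → ℕ) (c : (Fin n → ℕ) →₀ R),
      (c.sum fun l r => xMono (fun s => hR (x s)) l * mR r) =
          xMono (fun s => hR (x s)) j * hR (xMono x e) →
      c 0 = 0 := by
  intro j e c hc
  have hcompat := hUEA.1
  have hw : ∀ i, Even (w i) ∨ ringChar k = 2 := fun i => hchar.symm.imp (· i) id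
  have hN : ∀ b, hR b ∈ Submodule.span k {z | ∃ s a, z = hR (x s) * mR a} := fun b =>
    hcompat.mem_span_gen_mul_of_mem_adjoin hx hw (hgen ▸ Algebra.mem_top)
  have hright : ∀ t z, hR (x t) * z ∈ monomialSpan k (fun s => hR (x s)) mR (· ≠ 0) := by
    refine mul_mem_monomialSpan_ne_zero (fun t a => ⟨-P.br (x t) a, ?_⟩) (fun t s => ?_)
      hfree_span
    · rw [map_neg, hcompat.map_br_of_mem (hx t) (hw t)]
      abel
    · rw [← hcompat.br_of_mem (hx t) (hw t) (hx s)]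
      exact hN _
  refine coeff_zero_eq_zero_of_mem_monomialSpan hfree_ind (hc ▸ ?_)
  rcases eq_or_ne j 0 with rfl | hj
  · rw [xMono_zero, one_mul]
    refine (Submodule.span_le (p := monomialSpan k _ mR _)).2 ?_ (hN _)
    rintro _ ⟨s, a, rfl⟩
    exact hright s _
  · obtain ⟨u, l, hl, rfl⟩ := Pi.exists_eq_add_single_one_of_ne_zero hj
    rw [xMono_add_single _ l u hl, mul_assoc]
    exact hright u _

/-- Assume `char k = 2` or every `|x_i|` is even, so that `R^e` is a
free right `R`-module with basis `𝔠 = {y_1^{l_1} ⋯ y_n^{l_n}}`.  Then in the (unique)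
expansion `y_1^{j_1} ⋯ y_n^{j_n} h_R(x_1^{i_1} ⋯ x_n^{i_n}) = ∑_{Y ∈ 𝔠} Y a_Y` with
`a_Y ∈ R`, the coefficient `a_1` of the empty monomial is zero. -/
theorem stmt17 (k R E : Type) [Field k] [Ring R] [Algebra k R] [Ring E] [Algebra k E]
    (n : ℕ) (𝒜 : ℤ → Submodule k R) [GradedAlgebra 𝒜]
    (ℰ : ℤ → Submodule k E) [GradedAlgebra ℰ]
    (P : DGPoissonAlgebra k R 𝒜)
    (x : Fin n → R) (w : Fin n → ℤ) (hx : ∀ i, x i ∈ 𝒜 (w i))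
    (hgen : Algebra.adjoin k (Set.range x) = ⊤)
    (hchar : ringChar k = 2 ∨ ∀ i, Even (w i))
    (hbasis : LinearIndependent k (fun e : Fin n → ℕ => xMono x e) ∧
      Submodule.span k (Set.range fun e : Fin n → ℕ => xMono x e) = ⊤)
    (DE : DGAlgebra k E ℰ) (mR : R →ₐ[k] E) (hR : R →ₗ[k] E)
    (hUEA : IsUEA k 𝒜 ℰ P DE mR hR)
    -- `R^e` is a free right `R`-module with basis `𝔠`
    (hfree_ind : ∀ c : (Fin n → ℕ) →₀ R,
      (c.sum fun l r => xMono (fun s => hR (x s)) l * mR r) = 0 → c = 0)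
    (hfree_span : ∀ z : E, ∃ c : (Fin n → ℕ) →₀ R,
      z = c.sum fun l r => xMono (fun s => hR (x s)) l * mR r) :
    ∀ (j e : Fin n → ℕ) (c : (Fin n → ℕ) →₀ R),
      (c.sum fun l r => xMono (fun s => hR (x s)) l * mR r) =
          xMono (fun s => hR (x s)) j * hR (xMono x e) →
      c 0 = 0 :=
  stmt17_general k R E n 𝒜 ℰ P x w hx hgen hchar DE mR hR hUEA hfree_ind hfree_span
end
end
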